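/- arXiv:1812.01847 — 2 statements merged into one kernel-verified Lean document; each statement's English description precedes it below -/
import Mathlib

section
/- Let n ≥ 1 and s ∈ (0,1). For r ∈ (0,1) let A_r = B_1 \ B_r and x_1 ∈ ∂B_1. Then the principal value H_s(x_1, A_r) exists for every r ∈ (0,1), the map r ↦ H_s(x_1, A_r) is strictly increasing on (0,1), and H_s(x_1, A_r) ≥ k(n,s) > 0 for all r ∈ (0,1), where k(n,s) := H_s(x_1, B_1) is the fractional mean curvature of the unit ball at a boundary point. -/
open MeasureTheory Filter Metric Set

/-- `HasFracMeanCurvAt n s E x H` means that the fractional mean curvature of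
`E ⊆ ℝⁿ` at the point `x`, i.e. the principal value
`lim_{ε→0⁺} ∫_{|y-x|>ε} (χ_{Eᶜ}(y) - χ_E(y)) |x-y|^{-(n+s)} dy`, exists and equals `H`. -/
def HasFracMeanCurvAt (n : ℕ) (s : ℝ) (E : Set (EuclideanSpace ℝ (Fin n)))
    (x : EuclideanSpace ℝ (Fin n)) (H : ℝ) : Prop :=
  Tendsto (fun ε : ℝ =>
      ∫ y in {y : EuclideanSpace ℝ (Fin n) | ε < dist y x},
        (Set.indicator Eᶜ (fun _ => (1 : ℝ)) y - Set.indicator E (fun _ => (1 : ℝ)) y)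
          * ‖x - y‖ ^ (-((n : ℝ) + s)))
    (nhdsWithin 0 (Set.Ioi 0)) (nhds H)

/-!
At a point `x` of the unit sphere, the tangent halfspace `{y | ⟪y, x⟫ < 1}` has zero fractional
curvature, by the reflection through its boundary. Removing from a set `F` a subset `D ∌ x` adds
`2 ∫_D |x - y|^{-(n+s)} dy` to the curvature at `x`. The ball is the halfspace minus the sliver
between the sphere and the tangent hyperplane, so `H_s(x, B_1)` is twice the kernel integral over
the sliver; this is finite because the sliver meets `B(x, t)` in a slab of width `t² / 2`, of volume
`O(t^{n+1})`, while the kernel is singular of order only `n + s < n + 1`. Likewise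
`H_s(x, A_r) = H_s(x, B_1) + 2 ∫_{B_r} |x - y|^{-(n+s)} dy`, which is strictly increasing in `r`.
A reflection carries any boundary point to any other, so none of this depends on `x`.
-/

open scoped ENNReal Topology RealInnerProductSpace
open Module

section IndicatorSign

variable {α : Type*}

noncomputable def indicatorSign (E : Set α) (y : α) : ℝ :=
  Set.indicator Eᶜ (fun _ => (1 : ℝ)) y - Set.indicator E (fun _ => (1 : ℝ)) y

lemma indicatorSign_of_mem {E : Set α} {y : α} (h : y ∈ E) : indicatorSign E y = -1 := by
  simp [indicatorSign, h]

lemma indicatorSign_of_notMem {E : Set α} {y : α} (h : y ∉ E) : indicatorSign E y = 1 := by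
  simp [indicatorSign, h]

lemma abs_indicatorSign_le (E : Set α) (y : α) : |indicatorSign E y| ≤ 1 := by
  by_cases h : y ∈ E
  · simp [indicatorSign_of_mem h]
  · simp [indicatorSign_of_notMem h]

lemma indicatorSign_eq_neg {E : Set α} {y z : α} (h : z ∈ E ↔ y ∉ E) :
    indicatorSign E z = -indicatorSign E y := by
  by_cases hy : y ∈ E
  · rw [indicatorSign_of_notMem (by tauto), indicatorSign_of_mem hy, neg_neg]
  · rw [indicatorSign_of_mem (h.mpr hy), indicatorSign_of_notMem hy]

lemma indicatorSign_mul_of_subset {E F : Set α} (hEF : E ⊆ F) (g : α → ℝ) (y : α) :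
    indicatorSign E y * g y = indicatorSign F y * g y + 2 * (F \ E).indicator g y := by
  by_cases hE : y ∈ E
  · simp [indicatorSign_of_mem hE, indicatorSign_of_mem (hEF hE), hE]
  by_cases hF : y ∈ F
  · simp [indicatorSign_of_notMem hE, indicatorSign_of_mem hF, hE, hF]
    ring
  · simp [indicatorSign_of_notMem hE, indicatorSign_of_notMem hF, hF]

lemma measurable_indicatorSign [MeasurableSpace α] {E : Set α} (hE : MeasurableSet E) :
    Measurable (indicatorSign E) :=
  (measurable_const.indicator hE.compl).sub (measurable_const.indicator hE)

end IndicatorSign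

section MetricSpace

variable {X : Type*} [MetricSpace X] [MeasurableSpace X] {μ : Measure X} {x : X}

lemma measurableSet_dist_gt [OpensMeasurableSpace X] (x : X) (ε : ℝ) :
    MeasurableSet {y | ε < dist y x} :=
  (isOpen_lt continuous_const (continuous_id.dist continuous_const)).measurableSet

lemma tendsto_setIntegral_dist_gt_indicator [OpensMeasurableSpace X] {S : Set X} {f : X → ℝ}
    (hf : IntegrableOn f S μ) (hS : MeasurableSet S) (hxS : x ∉ S) :
    Tendsto (fun ε => ∫ y in {y | ε < dist y x}, S.indicator f y ∂μ) (𝓝[>] 0)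
      (𝓝 (∫ y in S, f y ∂μ)) := by
  have hf' : Integrable (S.indicator f) μ := hf.integrable_indicator hS
  simp_rw [← integral_indicator hS, ← integral_indicator (measurableSet_dist_gt x _)]
  refine tendsto_integral_filter_of_dominated_convergence (fun y => ‖S.indicator f y‖)
    (Eventually.of_forall fun ε =>
      hf'.aestronglyMeasurable.indicator (measurableSet_dist_gt x ε))
    (Eventually.of_forall fun ε => ae_of_all _ fun y => norm_indicator_le_norm_self _ _)
    hf'.norm (ae_of_all _ fun y => ?_)
  by_cases hy : y = x
  · subst hy
    simp [indicator_apply, hxS]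
  refine tendsto_const_nhds.congr' ?_
  filter_upwards [Ioo_mem_nhdsGT (dist_pos.mpr hy)] with ε hε
  exact (indicator_of_mem (show y ∈ {y | ε < dist y x} from hε.2) _).symm

lemma setLIntegral_rpow_neg_dist_le {S : Set X} {p r : ℝ} (hp : 0 ≤ p) (hr : 0 < r) :
    ∫⁻ y in S ∩ {y | r < dist y x}, ENNReal.ofReal (dist x y ^ (-p)) ∂μ
      ≤ ENNReal.ofReal (r ^ (-p)) * μ S :=
  calc ∫⁻ y in S ∩ {y | r < dist y x}, ENNReal.ofReal (dist x y ^ (-p)) ∂μ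
      ≤ ∫⁻ _ in S ∩ {y | r < dist y x}, ENNReal.ofReal (r ^ (-p)) ∂μ :=
        setLIntegral_mono measurable_const fun y hy => ENNReal.ofReal_le_ofReal <|
          Real.rpow_le_rpow_of_nonpos hr (dist_comm x y ▸ hy.2.le) (neg_nonpos.mpr hp)
    _ ≤ ENNReal.ofReal (r ^ (-p)) * μ S := by
        rw [setLIntegral_const]
        gcongr
        exact inter_subset_left

lemma lintegral_rpow_neg_dist_lt_top_of_measure_le {S : Set X} (hxS : x ∉ S) {p β : ℝ}
    {C : ℝ≥0∞} (hC : C ≠ ∞) (hp : 0 ≤ p) (hpβ : p < β)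
    (hvol : ∀ t ∈ Ioc (0 : ℝ) 1, μ (S ∩ closedBall x t) ≤ C * ENNReal.ofReal (t ^ β)) :
    ∫⁻ y in S ∩ closedBall x 1, ENNReal.ofReal (dist x y ^ (-p)) ∂μ < ∞ := by
  set t : ℕ → ℝ := fun j => (2 : ℝ)⁻¹ ^ j
  set shell : ℕ → Set X := fun j => S ∩ closedBall x (t j) ∩ {y | t (j + 1) < dist y x}
  have hcover : S ∩ closedBall x 1 ⊆ ⋃ j, shell j := by
    rintro y ⟨hyS, hy1⟩
    have hd : 0 < dist y x := dist_pos.mpr fun h => hxS (by rwa [← h])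
    obtain ⟨j, hj⟩ := exists_nat_pow_near_of_lt_one hd hy1 (by norm_num : (0 : ℝ) < 2⁻¹)
      (by norm_num)
    exact mem_iUnion.mpr ⟨j, ⟨hyS, hj.2⟩, hj.1⟩
  have hprod : ∀ j, t (j + 1) ^ (-p) * t j ^ β = 2 ^ p * ((2 : ℝ) ^ (p - β)) ^ j := by
    have ht : ∀ j : ℕ, t j = 2 ^ (-(j : ℝ)) := fun j => by
      rw [Real.rpow_neg zero_le_two, Real.rpow_natCast]
      exact inv_pow _ _
    intro j
    rw [ht, ht, ← Real.rpow_mul zero_le_two, ← Real.rpow_mul zero_le_two,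
      ← Real.rpow_add two_pos, ← Real.rpow_natCast, ← Real.rpow_mul zero_le_two,
      ← Real.rpow_add two_pos]
    congr 1
    push_cast
    ring
  have hshell : ∀ j, ∫⁻ y in shell j, ENNReal.ofReal (dist x y ^ (-p)) ∂μ
      ≤ C * ENNReal.ofReal (2 ^ p) * ENNReal.ofReal ((2 : ℝ) ^ (p - β)) ^ j := fun j =>
    calc ∫⁻ y in shell j, ENNReal.ofReal (dist x y ^ (-p)) ∂μ
        ≤ ENNReal.ofReal (t (j + 1) ^ (-p)) * (C * ENNReal.ofReal (t j ^ β)) :=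
          (setLIntegral_rpow_neg_dist_le hp (by positivity)).trans <| by
            gcongr
            exact hvol (t j) ⟨by positivity, pow_le_one₀ (by norm_num) (by norm_num)⟩
      _ = C * ENNReal.ofReal (2 ^ p) * ENNReal.ofReal ((2 : ℝ) ^ (p - β)) ^ j := by
          rw [mul_left_comm, ← ENNReal.ofReal_mul (by positivity), hprod,
            ENNReal.ofReal_mul (by positivity), ENNReal.ofReal_pow (by positivity), mul_assoc]
  have hq : ENNReal.ofReal ((2 : ℝ) ^ (p - β)) < 1 := by
    rw [ENNReal.ofReal_lt_one]
    exact Real.rpow_lt_one_of_one_lt_of_neg one_lt_two (by linarith)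
  calc ∫⁻ y in S ∩ closedBall x 1, ENNReal.ofReal (dist x y ^ (-p)) ∂μ
      ≤ ∑' j, ∫⁻ y in shell j, ENNReal.ofReal (dist x y ^ (-p)) ∂μ :=
        (lintegral_mono_set hcover).trans (lintegral_iUnion_le _ _)
    _ ≤ ∑' j, C * ENNReal.ofReal (2 ^ p) * ENNReal.ofReal ((2 : ℝ) ^ (p - β)) ^ j :=
        ENNReal.tsum_le_tsum hshell
    _ < ∞ := by
        rw [ENNReal.tsum_mul_left, ENNReal.tsum_geometric]
        exact ENNReal.mul_lt_top (ENNReal.mul_lt_top hC.lt_top ENNReal.ofReal_lt_top)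
          (ENNReal.inv_lt_top.mpr (tsub_pos_of_lt hq))

end MetricSpace

section TangentHalfspace

variable {V : Type*} [NormedAddCommGroup V] [InnerProductSpace ℝ V] {x : V}

def tangentHalfspace (x : V) : Set V := {y | ⟪y, x⟫ < 1}

def sliver (x : V) : Set V := tangentHalfspace x \ ball 0 1

lemma isOpen_tangentHalfspace (x : V) : IsOpen (tangentHalfspace x) :=
  isOpen_lt (continuous_id.inner continuous_const) continuous_const

lemma ball_subset_tangentHalfspace (hx : ‖x‖ = 1) : ball (0 : V) 1 ⊆ tangentHalfspace x := by
  intro y hy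
  have := real_inner_le_norm y x
  rw [hx, mul_one] at this
  exact this.trans_lt (mem_ball_zero_iff.mp hy)

lemma self_notMem_sliver (hx : ‖x‖ = 1) : x ∉ sliver x := fun h => by
  have : ⟪x, x⟫ < 1 := h.1
  rw [real_inner_self_eq_norm_sq, hx] at this
  norm_num at this

lemma sliver_inter_closedBall_subset (hx : ‖x‖ = 1) (t : ℝ) :
    sliver x ∩ closedBall x t ⊆ {y | 1 - t ^ 2 / 2 ≤ ⟪y, x⟫ ∧ ⟪y, x⟫ < 1} ∩ closedBall x t := by
  rintro y ⟨⟨hyH, hyB⟩, hyt⟩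
  refine ⟨⟨?_, hyH⟩, hyt⟩
  have h1 : 1 ≤ ‖y‖ := not_lt.mp (mt mem_ball_zero_iff.mpr hyB)
  have h2 : ‖y - x‖ ≤ t := mem_closedBall_iff_norm.mp hyt
  have h3 := norm_sub_sq_real y x
  rw [hx] at h3
  nlinarith [norm_nonneg (y - x)]

noncomputable def tangentReflection (x : V) : V ≃ₜ V :=
  ((Homeomorph.subRight x).trans (Submodule.reflection (ℝ ∙ x)ᗮ).toHomeomorph).trans
    (Homeomorph.addLeft x)

lemma tangentReflection_apply (x y : V) :
    tangentReflection x y = x + Submodule.reflection (ℝ ∙ x)ᗮ (y - x) := rfl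

lemma norm_sub_tangentReflection (x y : V) : ‖x - tangentReflection x y‖ = ‖x - y‖ := by
  rw [tangentReflection_apply, sub_add_cancel_left, norm_neg, LinearIsometryEquiv.norm_map,
    norm_sub_rev]

lemma dist_tangentReflection (x y : V) : dist (tangentReflection x y) x = dist y x := by
  rw [dist_comm, dist_eq_norm, norm_sub_tangentReflection, ← dist_eq_norm, dist_comm]

lemma inner_tangentReflection (hx : ‖x‖ = 1) (y : V) :
    ⟪tangentReflection x y, x⟫ = 2 - ⟪y, x⟫ := by
  have h := (Submodule.reflection (ℝ ∙ x)ᗮ).inner_map_map (y - x) x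
  have hxx : ⟪x, x⟫ = 1 := by rw [real_inner_self_eq_norm_sq, hx, one_pow]
  rw [Submodule.reflection_orthogonalComplement_singleton_eq_neg, inner_neg_right, inner_sub_left,
    hxx] at h
  rw [tangentReflection_apply, inner_add_left, hxx]
  linarith

end TangentHalfspace

section Volume

variable {V : Type*} [NormedAddCommGroup V] [InnerProductSpace ℝ V] [FiniteDimensional ℝ V]
  [MeasurableSpace V] [BorelSpace V] {x : V} {p : ℝ}

lemma integrableOn_rpow_neg_dist_gt (hp : (finrank ℝ V : ℝ) < p) (x : V) {ε : ℝ}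
    (hε : 0 < ε) : IntegrableOn (fun y => ‖x - y‖ ^ (-p)) {y | ε < dist y x} := by
  have hp0 : 0 ≤ p := (Nat.cast_nonneg _).trans hp.le
  have hdom : Integrable fun y : V => (ε / (1 + ε)) ^ (-p) * (1 + ‖y - x‖) ^ (-p) :=
    ((integrable_one_add_norm hp).comp_sub_right x).const_mul _
  refine hdom.integrableOn.mono'
    ((measurable_const.sub measurable_id).norm.pow_const _).aestronglyMeasurable ?_
  filter_upwards [ae_restrict_mem (measurableSet_dist_gt x ε)] with y (hy : ε < dist y x)
  rw [dist_eq_norm, ← norm_neg, neg_sub] at hy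
  rw [norm_sub_rev y x, ← Real.mul_rpow (by positivity) (by positivity),
    Real.norm_of_nonneg (by positivity)]
  refine Real.rpow_le_rpow_of_nonpos (by positivity) ?_ (neg_nonpos.mpr hp0)
  rw [div_mul_eq_mul_div, div_le_iff₀ (by positivity)]
  nlinarith

lemma natCast_mul_measure_le_of_pairwiseDisjoint {G : Type*} [MeasurableSpace G] [AddGroup G]
    [MeasurableAdd G] (μ : Measure G) [μ.IsAddRightInvariant] {S T : Set G} (hS : MeasurableSet S)
    (v : ℕ → G) (K : ℕ)
    (hdisj : (↑(Finset.range K) : Set ℕ).PairwiseDisjoint fun k => (· + v k) ⁻¹' S)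
    (hT : ∀ k < K, (· + v k) ⁻¹' S ⊆ T) :
    (K : ℝ≥0∞) * μ S ≤ μ T :=
  calc (K : ℝ≥0∞) * μ S = μ (⋃ k ∈ Finset.range K, (· + v k) ⁻¹' S) := by
        rw [measure_biUnion_finset hdisj fun k _ => hS.preimage (measurable_add_const _),
          Finset.sum_congr rfl fun k _ => measure_preimage_add_right _ _ _, Finset.sum_const,
          Finset.card_range, nsmul_eq_mul]
    _ ≤ μ T := measure_mono <| iUnion₂_subset fun k hk => hT k (Finset.mem_range.mp hk)

lemma volume_slab_inter_closedBall_le (hx : ‖x‖ = 1) (c : ℝ) {a : ℝ} (ha : 0 < a)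
    (z : V) {t : ℝ} (ht : 0 < t) :
    volume ({y | c - a ≤ ⟪y, x⟫ ∧ ⟪y, x⟫ < c} ∩ closedBall z t)
      ≤ ENNReal.ofReal (a / t) * volume (closedBall z (2 * t)) := by
  set S := {y | c - a ≤ ⟪y, x⟫ ∧ ⟪y, x⟫ < c} ∩ closedBall z t
  have hinner : Measurable fun y : V => ⟪y, x⟫ := (continuous_id.inner continuous_const).measurable
  have hS : MeasurableSet S := by
    refine MeasurableSet.inter ?_ measurableSet_closedBall
    exact (measurableSet_le measurable_const hinner).inter
      (measurableSet_lt hinner measurable_const)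
  -- `⌈t / a⌉` translates of `S` by multiples of `a • x` are disjoint and fit in the doubled ball
  have hshift : ∀ k : ℕ, ∀ y ∈ (· + (-((k : ℝ) * a)) • x) ⁻¹' S,
      c - a + k * a ≤ ⟪y, x⟫ ∧ ⟪y, x⟫ < c + k * a ∧ dist y z ≤ t + k * a := by
    intro k y ⟨⟨h1, h2⟩, h3⟩
    have hi : ⟪y + (-((k : ℝ) * a)) • x, x⟫ = ⟪y, x⟫ - k * a := by
      rw [inner_add_left, real_inner_smul_left, real_inner_self_eq_norm_sq, hx]
      ring
    rw [hi] at h1 h2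
    refine ⟨by linarith, by linarith, ?_⟩
    calc dist y z ≤ dist y (y + (-((k : ℝ) * a)) • x) + dist (y + (-((k : ℝ) * a)) • x) z :=
          dist_triangle _ _ _
      _ ≤ k * a + t := by
          gcongr
          · rw [dist_self_add_right, norm_smul, hx, norm_neg, Real.norm_of_nonneg (by positivity),
              mul_one]
          · exact h3
      _ = t + k * a := add_comm _ _
  have hdisj_lt : ∀ k l : ℕ, k < l → Disjoint ((· + (-((k : ℝ) * a)) • x) ⁻¹' S)
      ((· + (-((l : ℝ) * a)) • x) ⁻¹' S) := by
    refine fun k l hlt => Set.disjoint_left.mpr fun y hyk hyl => ?_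
    have hkl : (k : ℝ) + 1 ≤ l := by exact_mod_cast hlt
    nlinarith [(hshift k y hyk).2.1, (hshift l y hyl).1]
  have hK := natCast_mul_measure_le_of_pairwiseDisjoint volume hS _ ⌈t / a⌉₊
    (fun k _ l _ hkl => hkl.lt_or_gt.elim (hdisj_lt k l) fun h => (hdisj_lt l k h).symm)
    (T := closedBall z (2 * t)) fun k hk y hy => by
      have hka : (k : ℝ) * a < t := (lt_div_iff₀ ha).mp (Nat.lt_ceil.mp hk)
      rw [mem_closedBall]
      linarith [(hshift k y hy).2.2]
  calc volume S = ENNReal.ofReal (a / t) * (ENNReal.ofReal (t / a) * volume S) := by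
        rw [← mul_assoc, ← ENNReal.ofReal_mul (by positivity), div_mul_div_cancel₀ ht.ne',
          div_self ha.ne', ENNReal.ofReal_one, one_mul]
    _ ≤ ENNReal.ofReal (a / t) * volume (closedBall z (2 * t)) := by
        gcongr
        refine le_trans ?_ hK
        gcongr
        rw [← ENNReal.ofReal_natCast]
        exact ENNReal.ofReal_le_ofReal (Nat.le_ceil _)

lemma volume_sliver_inter_closedBall_le (hx : ‖x‖ = 1) {t : ℝ} (ht : 0 < t) :
    volume (sliver x ∩ closedBall x t)
      ≤ ENNReal.ofReal (2 ^ finrank ℝ V / 2) * volume (ball (0 : V) 1)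
        * ENNReal.ofReal (t ^ ((finrank ℝ V : ℝ) + 1)) := by
  calc volume (sliver x ∩ closedBall x t)
      ≤ ENNReal.ofReal (t ^ 2 / 2 / t) * volume (closedBall x (2 * t)) :=
        (measure_mono (sliver_inter_closedBall_subset hx t)).trans
          (volume_slab_inter_closedBall_le hx 1 (by positivity) x ht)
    _ = _ := by
        rw [Measure.addHaar_closedBall _ _ (by positivity), mul_left_comm, ← mul_assoc,
          ← ENNReal.ofReal_mul (by positivity), mul_right_comm,
          ← ENNReal.ofReal_mul (by positivity), Real.rpow_add_one ht.ne', Real.rpow_natCast]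
        congr 2
        field_simp
        ring

lemma integrableOn_sliver (hx : ‖x‖ = 1) (hp : (finrank ℝ V : ℝ) < p)
    (hp' : p < finrank ℝ V + 1) : IntegrableOn (fun y => ‖x - y‖ ^ (-p)) (sliver x) := by
  have hsplit : sliver x ⊆ (sliver x ∩ closedBall x 1) ∪ {y | 1 < dist y x} := fun y hy =>
    (le_or_gt (dist y x) 1).imp (fun h => ⟨hy, h⟩) id
  refine (IntegrableOn.union ?_ (integrableOn_rpow_neg_dist_gt hp x one_pos)).mono_set hsplit
  refine ⟨((measurable_const.sub measurable_id).norm.pow_const _).aestronglyMeasurable,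
    (hasFiniteIntegral_iff_ofReal (ae_of_all _ fun y => by positivity)).mpr ?_⟩
  simpa only [dist_eq_norm] using lintegral_rpow_neg_dist_lt_top_of_measure_le
    (self_notMem_sliver hx) (by finiteness) ((Nat.cast_nonneg _).trans hp.le) hp'
    fun t ht => volume_sliver_inter_closedBall_le hx ht.1

lemma integrableOn_ball_of_lt_norm (hp : (finrank ℝ V : ℝ) < p) {r : ℝ} (hr : r < ‖x‖) :
    IntegrableOn (fun y => ‖x - y‖ ^ (-p)) (ball 0 r) := by
  refine (integrableOn_rpow_neg_dist_gt hp x (by linarith : 0 < (‖x‖ - r) / 2)).mono_set ?_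
  intro y hy
  have := norm_sub_norm_le x y
  rw [mem_ball_zero_iff] at hy
  rw [mem_ofPred_eq, dist_comm, dist_eq_norm]
  linarith

lemma integrableOn_indicatorSign_mul_rpow_neg {E : Set V} (hE : MeasurableSet E)
    (hp : (finrank ℝ V : ℝ) < p) (x : V) {ε : ℝ} (hε : 0 < ε) :
    IntegrableOn (fun y => indicatorSign E y * ‖x - y‖ ^ (-p)) {y | ε < dist y x} :=
  (integrableOn_rpow_neg_dist_gt hp x hε).bdd_mul
    (measurable_indicatorSign hE).aestronglyMeasurable
    (ae_of_all _ fun y => (Real.norm_eq_abs _).trans_le (abs_indicatorSign_le E y))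

lemma measurePreserving_tangentReflection (x : V) :
    MeasurePreserving (tangentReflection x) volume volume :=
  (measurePreserving_add_left volume x).comp
    ((Submodule.reflection (ℝ ∙ x)ᗮ).measurePreserving.comp
      (measurePreserving_sub_right volume x))

lemma volume_setOf_inner_eq (hx : ‖x‖ = 1) (c : ℝ) : volume {y : V | ⟪y, x⟫ = c} = 0 := by
  have hx0 : x ≠ 0 := norm_ne_zero_iff.mp (by rw [hx]; exact one_ne_zero)
  have hset : {y : V | ⟪y, x⟫ = c} = (· + -(c • x)) ⁻¹' ((ℝ ∙ x)ᗮ : Submodule ℝ V) := by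
    ext y
    simp only [mem_ofPred_eq, mem_preimage, SetLike.mem_coe,
      Submodule.mem_orthogonal_singleton_iff_inner_right, inner_add_right, inner_neg_right,
      real_inner_smul_right, real_inner_self_eq_norm_sq, hx, real_inner_comm x y]
    constructor <;> intro h <;> linarith
  rw [hset, measure_preimage_add_right]
  refine Measure.addHaar_submodule _ _ fun htop => hx0 ?_
  rwa [Submodule.orthogonal_eq_top_iff, Submodule.span_singleton_eq_bot] at htop

/- The reflection through the boundary hyperplane preserves `T` and the kernel, and it swaps the
halfspace with its complement off that null hyperplane. -/
lemma integral_indicatorSign_tangentHalfspace_mul (hx : ‖x‖ = 1) (g : ℝ → ℝ) (ε : ℝ) :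
    ∫ y in {y | ε < dist y x}, indicatorSign (tangentHalfspace x) y * g ‖x - y‖ = 0 := by
  set T := {y | ε < dist y x}
  set f := fun y => indicatorSign (tangentHalfspace x) y * g ‖x - y‖
  have hpre : tangentReflection x ⁻¹' T = T := by
    ext y
    simp only [T, mem_preimage, mem_ofPred_eq, dist_tangentReflection]
  have hinv : ∫ y in T, f (tangentReflection x y) = ∫ y in T, f y := by
    simpa only [hpre] using (measurePreserving_tangentReflection x).setIntegral_preimage_emb
      (tangentReflection x).measurableEmbedding f T
  have hflip : ∀ᵐ y, f (tangentReflection x y) = -f y := by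
    have hnull : ∀ᵐ y : V, ⟪y, x⟫ ≠ 1 := measure_eq_zero_iff_ae_notMem.mp
      (volume_setOf_inner_eq hx 1)
    filter_upwards [hnull] with y hy
    have hsign : tangentReflection x y ∈ tangentHalfspace x ↔ y ∉ tangentHalfspace x := by
      simp only [tangentHalfspace, mem_ofPred_eq, inner_tangentReflection hx, not_lt]
      exact ⟨fun h => by linarith, fun h => by linarith [lt_of_le_of_ne h hy.symm]⟩
    simp only [f, indicatorSign_eq_neg hsign, norm_sub_tangentReflection, neg_mul]
  have hanti : ∫ y in T, f (tangentReflection x y) = -∫ y in T, f y := by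
    rw [integral_congr_ae (ae_restrict_of_ae hflip), integral_neg]
  linarith

lemma setIntegral_rpow_neg_pos {S U : Set V} (hint : IntegrableOn (fun y => ‖x - y‖ ^ (-p)) S)
    (hxS : x ∉ S) (hU : IsOpen U) (hUne : U.Nonempty) (hUS : U ⊆ S) :
    0 < ∫ y in S, ‖x - y‖ ^ (-p) := by
  rw [setIntegral_pos_iff_support_of_nonneg_ae (ae_of_all _ fun y => by positivity) hint]
  refine (hU.measure_pos volume hUne).trans_le (measure_mono fun y hy => ⟨?_, hUS hy⟩)
  have hxy : 0 < ‖x - y‖ := norm_pos_iff.mpr (sub_ne_zero.mpr fun h => hxS (h ▸ hUS hy))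
  exact (Real.rpow_pos_of_pos hxy _).ne'

lemma setIntegral_rpow_neg_sliver_pos (hx : ‖x‖ = 1) (hp : (finrank ℝ V : ℝ) < p)
    (hp' : p < finrank ℝ V + 1) : 0 < ∫ y in sliver x, ‖x - y‖ ^ (-p) := by
  refine setIntegral_rpow_neg_pos (U := tangentHalfspace x ∩ (closedBall 0 1)ᶜ)
    (integrableOn_sliver hx hp hp') (self_notMem_sliver hx)
    ((isOpen_tangentHalfspace x).inter isClosed_closedBall.isOpen_compl) ⟨(-2 : ℝ) • x, ?_, ?_⟩ ?_
  · show ⟪(-2 : ℝ) • x, x⟫ < 1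
    rw [real_inner_smul_left, real_inner_self_eq_norm_sq, hx]
    norm_num
  · simp [norm_smul, hx]
  · exact fun y ⟨hyH, hyB⟩ => ⟨hyH, fun h => hyB (ball_subset_closedBall h)⟩

lemma strictMonoOn_setIntegral_rpow_neg_ball (hx : ‖x‖ = 1) (hp : (finrank ℝ V : ℝ) < p) :
    StrictMonoOn (fun r => ∫ y in ball 0 r, ‖x - y‖ ^ (-p)) (Ico 0 1) := by
  intro r₁ ⟨hr₁, _⟩ r₂ ⟨_, hr₂⟩ hr
  have hint := integrableOn_ball_of_lt_norm hp (hx ▸ hr₂ : r₂ < ‖x‖)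
  have hdiff := setIntegral_sdiff measurableSet_ball hint (ball_subset_ball (x := (0 : V)) hr.le)
  have hmid : ‖((r₁ + r₂) / 2) • x‖ = (r₁ + r₂) / 2 := by
    rw [norm_smul, hx, mul_one, Real.norm_of_nonneg (by linarith)]
  have hpos : 0 < ∫ y in ball 0 r₂ \ ball 0 r₁, ‖x - y‖ ^ (-p) := by
    refine setIntegral_rpow_neg_pos (hint.mono_set sdiff_subset) (fun h => ?_)
      (isOpen_ball.inter isClosed_closedBall.isOpen_compl) ⟨((r₁ + r₂) / 2) • x, ?_, ?_⟩
      fun y ⟨hy₂, hy₁⟩ => ⟨hy₂, fun h => hy₁ (ball_subset_closedBall h)⟩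
    · linarith [mem_ball_zero_iff.mp h.1]
    · rw [mem_ball_zero_iff, hmid]
      linarith
    · rw [mem_compl_iff, mem_closedBall_zero_iff, hmid, not_le]
      linarith
  linarith

lemma setIntegral_rpow_neg_preimage (U : V ≃ₗᵢ[ℝ] V) (x : V) (S : Set V) (p : ℝ) :
    ∫ y in U ⁻¹' S, ‖x - y‖ ^ (-p) = ∫ y in S, ‖U x - y‖ ^ (-p) := by
  simpa only [← map_sub, LinearIsometryEquiv.norm_map] using
    U.measurePreserving.setIntegral_preimage_emb U.toHomeomorph.measurableEmbedding
      (fun y => ‖U x - y‖ ^ (-p)) S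

lemma setIntegral_rpow_neg_sliver_eq {x' : V} (hx : ‖x‖ = 1) (hx' : ‖x'‖ = 1) :
    ∫ y in sliver x, ‖x - y‖ ^ (-p) = ∫ y in sliver x', ‖x' - y‖ ^ (-p) := by
  set U := Submodule.reflection (ℝ ∙ (x - x'))ᗮ
  have hU : U x = x' := Submodule.reflection_sub (hx.trans hx'.symm)
  have hpre : U ⁻¹' sliver x' = sliver x := by
    ext y
    simp only [sliver, tangentHalfspace, mem_preimage, Set.mem_sdiff, mem_ofPred_eq,
      mem_ball_zero_iff, LinearIsometryEquiv.norm_map, ← hU, LinearIsometryEquiv.inner_map_map]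
  simpa only [hpre, hU] using setIntegral_rpow_neg_preimage U x (sliver x') p

lemma setIntegral_rpow_neg_ball_eq {x' : V} (hx : ‖x‖ = ‖x'‖) (r : ℝ) :
    ∫ y in ball 0 r, ‖x - y‖ ^ (-p) = ∫ y in ball 0 r, ‖x' - y‖ ^ (-p) := by
  have hpre : Submodule.reflection (ℝ ∙ (x - x'))ᗮ ⁻¹' ball 0 r = ball 0 r := by
    ext y
    simp only [mem_preimage, mem_ball_zero_iff, LinearIsometryEquiv.norm_map]
  simpa only [hpre, Submodule.reflection_sub hx] using
    setIntegral_rpow_neg_preimage (Submodule.reflection (ℝ ∙ (x - x'))ᗮ) x (ball 0 r) p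

end Volume

section Curvature

variable {n : ℕ} {s : ℝ} {x : EuclideanSpace ℝ (Fin n)}

lemma finrank_euclideanSpace_lt_add (hs : 0 < s) :
    (finrank ℝ (EuclideanSpace ℝ (Fin n)) : ℝ) < n + s := by
  simp [hs]

lemma hasFracMeanCurvAt_iff {E : Set (EuclideanSpace ℝ (Fin n))} {H : ℝ} :
    HasFracMeanCurvAt n s E x H ↔ Tendsto (fun ε : ℝ => ∫ y in {y | ε < dist y x},
      indicatorSign E y * ‖x - y‖ ^ (-((n : ℝ) + s))) (𝓝[>] 0) (𝓝 H) :=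
  Iff.rfl

lemma hasFracMeanCurvAt_tangentHalfspace (hx : ‖x‖ = 1) :
    HasFracMeanCurvAt n s (tangentHalfspace x) x 0 :=
  tendsto_const_nhds.congr fun ε =>
    (integral_indicatorSign_tangentHalfspace_mul hx (· ^ (-((n : ℝ) + s))) ε).symm

lemma HasFracMeanCurvAt.of_subset (hs : 0 < s) {E F : Set (EuclideanSpace ℝ (Fin n))} {H : ℝ}
    (hF : HasFracMeanCurvAt n s F x H) (hEF : E ⊆ F) (hEm : MeasurableSet E)
    (hFm : MeasurableSet F) (hint : IntegrableOn (fun y => ‖x - y‖ ^ (-((n : ℝ) + s))) (F \ E))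
    (hx : x ∉ F \ E) :
    HasFracMeanCurvAt n s E x (H + 2 * ∫ y in F \ E, ‖x - y‖ ^ (-((n : ℝ) + s))) := by
  rw [hasFracMeanCurvAt_iff] at hF ⊢
  refine (hF.add ((tendsto_setIntegral_dist_gt_indicator hint (hFm.diff hEm) hx).const_mul
    2)).congr' ?_
  filter_upwards [self_mem_nhdsWithin] with ε (hε : 0 < ε)
  have hindicator := ((hint.integrable_indicator (hFm.diff hEm)).const_mul 2).integrableOn
    (s := {y | ε < dist y x})
  rw [← integral_const_mul, ← integral_add (integrableOn_indicatorSign_mul_rpow_neg hFm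
    (finrank_euclideanSpace_lt_add hs) x hε) hindicator]
  exact setIntegral_congr_fun (measurableSet_dist_gt x ε) fun y _ =>
    (indicatorSign_mul_of_subset hEF (fun y => ‖x - y‖ ^ (-((n : ℝ) + s))) y).symm

lemma hasFracMeanCurvAt_ball (hs : s ∈ Ioo 0 1) (hx : ‖x‖ = 1) :
    HasFracMeanCurvAt n s (ball 0 1) x (2 * ∫ y in sliver x, ‖x - y‖ ^ (-((n : ℝ) + s))) := by
  have hp' : (n : ℝ) + s < finrank ℝ (EuclideanSpace ℝ (Fin n)) + 1 := by simp [hs.2]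
  have h := (hasFracMeanCurvAt_tangentHalfspace hx).of_subset hs.1
    (ball_subset_tangentHalfspace hx) measurableSet_ball (isOpen_tangentHalfspace x).measurableSet
    (integrableOn_sliver hx (finrank_euclideanSpace_lt_add hs.1) hp') (self_notMem_sliver hx)
  rw [zero_add] at h
  exact h

lemma HasFracMeanCurvAt.ball_diff_ball (hs : 0 < s) {H r : ℝ}
    (hB : HasFracMeanCurvAt n s (ball 0 1) x H) (hx : ‖x‖ = 1) (hr : r < 1) :
    HasFracMeanCurvAt n s (ball 0 1 \ ball 0 r) x
      (H + 2 * ∫ y in ball 0 r, ‖x - y‖ ^ (-((n : ℝ) + s))) := by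
  have hdiff : ball (0 : EuclideanSpace ℝ (Fin n)) 1 \ (ball 0 1 \ ball 0 r) = ball 0 r :=
    sdiff_sdiff_cancel_left (ball_subset_ball hr.le)
  have hxr : x ∉ ball 0 r := by simpa [hx] using hr.le
  have h := hB.of_subset (E := ball 0 1 \ ball 0 r) hs sdiff_subset
    (measurableSet_ball.diff measurableSet_ball) measurableSet_ball
    (by rw [hdiff]; exact integrableOn_ball_of_lt_norm (finrank_euclideanSpace_lt_add hs) (hx ▸ hr))
    (by rwa [hdiff])
  rwa [hdiff] at h

end Curvature

theorem annulus_outer_curv_strictMono (n : ℕ) (hn : 1 ≤ n) (s : ℝ)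
    (hs : s ∈ Set.Ioo (0 : ℝ) 1) :
    ∃ (Hout : ℝ → ℝ) (k : ℝ),
      (∀ x : EuclideanSpace ℝ (Fin n), ‖x‖ = 1 →
        HasFracMeanCurvAt n s (Metric.ball 0 1) x k) ∧
      0 < k ∧
      (∀ r ∈ Set.Ioo (0 : ℝ) 1,
        ∀ x : EuclideanSpace ℝ (Fin n), ‖x‖ = 1 →
          HasFracMeanCurvAt n s (Metric.ball 0 1 \ Metric.ball 0 r) x (Hout r)) ∧
      StrictMonoOn Hout (Set.Ioo (0 : ℝ) 1) ∧
      (∀ r ∈ Set.Ioo (0 : ℝ) 1, k ≤ Hout r) := by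
  obtain ⟨x₀, hx₀⟩ : ∃ x : EuclideanSpace ℝ (Fin n), ‖x‖ = 1 :=
    ⟨EuclideanSpace.single ⟨0, hn⟩ 1, by simp⟩
  have hp := finrank_euclideanSpace_lt_add (n := n) hs.1
  refine ⟨fun r => 2 * (∫ y in sliver x₀, ‖x₀ - y‖ ^ (-((n : ℝ) + s)))
      + 2 * ∫ y in ball 0 r, ‖x₀ - y‖ ^ (-((n : ℝ) + s)),
    2 * ∫ y in sliver x₀, ‖x₀ - y‖ ^ (-((n : ℝ) + s)), fun x hx => ?_, ?_, fun r hr x hx => ?_,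
    ?_, fun r _ => ?_⟩
  · rw [setIntegral_rpow_neg_sliver_eq hx₀ hx]
    exact hasFracMeanCurvAt_ball hs hx
  · exact mul_pos two_pos (setIntegral_rpow_neg_sliver_pos hx₀ hp (by simp [hs.2]))
  · beta_reduce
    rw [setIntegral_rpow_neg_sliver_eq hx₀ hx, setIntegral_rpow_neg_ball_eq (hx₀.trans hx.symm)]
    exact (hasFracMeanCurvAt_ball hs hx).ball_diff_ball hs.1 hx hr.2
  · intro r₁ hr₁ r₂ hr₂ h
    simpa using
      (strictMonoOn_setIntegral_rpow_neg_ball hx₀ hp).mono Ioo_subset_Ico_self hr₁ hr₂ h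
  · simpa using setIntegral_nonneg measurableSet_ball fun y _ => by positivity
end

section
/- Let n ≥ 1, s ∈ (0,1) and 0 < r < r' < 1. Then for any points x_r, x_{r'} ∈ ℝⁿ with |x_r| = r and |x_{r'}| = r', the integrals ∫_{ℝⁿ∖B_1} |x_r − y|^{−(n+s)} dy and ∫_{ℝⁿ∖B_1} |x_{r'} − y|^{−(n+s)} dy are finite and satisfy ∫_{ℝⁿ∖B_1} |x_r − y|^{−(n+s)} dy < ∫_{ℝⁿ∖B_1} |x_{r'} − y|^{−(n+s)} dy. -/
/-!
The exterior integral `∫_{|y| ≥ 1} φ(|x - y|) dy` is invariant under linear isometries, so it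
depends only on `|x|`, and we may put `x = r e`, `x' = r' e` with `|e| = 1`. The reflection `R` in
the hyperplane `⟪e, z⟫ = (r + r') / 2` exchanges `r e` and `r' e` and maps `A = {|y| ≥ 1}` onto the
complement of `D = B((r + r') e, 1)`. Hence `R` preserves `A \ D`, on which the two integrals agree,
while every point of `A ∩ D`, a set of positive measure, is strictly closer to `r' e` than to
`r e`. For a strictly decreasing kernel such as `φ(t) = t^{-(n+s)}` this gives the strict
inequality; integrability holds because `n + s > n`.
-/

open MeasureTheory Metric Set Module Submodule
open scoped RealInnerProductSpace

lemma setIntegral_lt_setIntegral_of_forall_lt {X : Type*} [MeasurableSpace X] {μ : Measure X}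
    {s : Set X} {f g : X → ℝ} (hs : MeasurableSet s) (hμs : μ s ≠ 0)
    (hf : IntegrableOn f s μ) (hg : IntegrableOn g s μ) (hlt : ∀ x ∈ s, f x < g x) :
    ∫ x in s, f x ∂μ < ∫ x in s, g x ∂μ := by
  rw [← sub_pos, ← integral_sub hg hf]
  refine (setIntegral_pos_iff_support_of_nonneg_ae ?_ (hg.sub hf)).2 ?_
  · filter_upwards [ae_restrict_mem hs] with x hx using (sub_pos.2 (hlt x hx)).le
  · have hsupp : s ⊆ Function.support (g - f) := fun x hx => (sub_pos.2 (hlt x hx)).ne'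
    rwa [inter_eq_right.2 hsupp, pos_iff_ne_zero]

variable {E : Type*} [NormedAddCommGroup E]

lemma mul_one_add_norm_le_norm_sub {x y : E} (hy : 1 ≤ ‖y‖) :
    (1 - ‖x‖) / 2 * (1 + ‖y‖) ≤ ‖x - y‖ := by
  have h := norm_sub_norm_le y x
  rw [norm_sub_rev] at h
  nlinarith [norm_nonneg x]

lemma integrableOn_compl_ball_norm_sub_rpow_neg [NormedSpace ℝ E] [FiniteDimensional ℝ E]
    [MeasurableSpace E] [BorelSpace E] (μ : Measure E) [μ.IsAddHaarMeasure] {a : ℝ}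
    (ha : finrank ℝ E < a) {x : E} (hx : ‖x‖ < 1) :
    IntegrableOn (fun y => ‖x - y‖ ^ (-a)) (ball 0 1)ᶜ μ := by
  have hc : 0 < (1 - ‖x‖) / 2 := by linarith
  have ha0 : 0 ≤ a := (Nat.cast_nonneg _).trans ha.le
  refine Integrable.mono' ((integrable_one_add_norm ha).const_mul (((1 - ‖x‖) / 2) ^ (-a))).restrict
    (Measurable.aestronglyMeasurable (by fun_prop)) ?_
  filter_upwards [ae_restrict_mem measurableSet_ball.compl] with y hy
  have hy : 1 ≤ ‖y‖ := by simpa using hy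
  rw [Real.norm_of_nonneg (by positivity), ← Real.mul_rpow hc.le (by positivity)]
  exact Real.rpow_le_rpow_of_nonpos (by positivity) (mul_one_add_norm_le_norm_sub hy) (by linarith)

variable [InnerProductSpace ℝ E]

section Isometry

variable [MeasurableSpace E] [BorelSpace E] [FiniteDimensional ℝ E] (φ : ℝ → ℝ)
  (T : E ≃ₗᵢ[ℝ] E) (x : E)

lemma integrableOn_compl_ball_comp_norm_sub_map_iff :
    IntegrableOn (fun y => φ ‖T x - y‖) (ball 0 1)ᶜ ↔
      IntegrableOn (fun y => φ ‖x - y‖) (ball 0 1)ᶜ := by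
  rw [← T.measurePreserving.integrableOn_comp_preimage T.toHomeomorph.measurableEmbedding]
  simp [Function.comp_def, ← map_sub, T.preimage_ball]

lemma setIntegral_compl_ball_comp_norm_sub_map :
    ∫ y in (ball 0 1)ᶜ, φ ‖T x - y‖ = ∫ y in (ball 0 1)ᶜ, φ ‖x - y‖ := by
  rw [← T.measurePreserving.setIntegral_preimage_emb T.toHomeomorph.measurableEmbedding]
  simp [← map_sub, T.preimage_ball]

end Isometry

/-- For `‖e‖ = 1`, the reflection in the affine hyperplane `{z | ⟪e, z⟫ = c / 2}`. -/
noncomputable def hyperplaneReflection (e : E) (c : ℝ) (z : E) : E :=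
  c • e + reflection (ℝ ∙ e)ᗮ z

namespace hyperplaneReflection

variable (e : E) (c : ℝ)

lemma apply_sub_apply (u v : E) :
    hyperplaneReflection e c u - hyperplaneReflection e c v = reflection (ℝ ∙ e)ᗮ (u - v) := by
  simp [hyperplaneReflection, map_sub]

lemma apply_smul (ρ : ℝ) : hyperplaneReflection e c (ρ • e) = (c - ρ) • e := by
  rw [sub_smul, sub_eq_add_neg]
  simp [hyperplaneReflection, reflection_orthogonalComplement_singleton_eq_neg]

lemma apply_zero : hyperplaneReflection e c 0 = c • e := by
  simp [hyperplaneReflection]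

lemma involutive : Function.Involutive (hyperplaneReflection e c) := fun z => by
  simp [hyperplaneReflection, reflection_orthogonalComplement_singleton_eq_neg]

lemma norm_sub_apply (u z : E) :
    ‖u - hyperplaneReflection e c z‖ = ‖hyperplaneReflection e c u - z‖ := by
  conv_rhs => rw [← involutive e c z, apply_sub_apply, LinearIsometryEquiv.norm_map]

variable [MeasurableSpace E] [BorelSpace E] [FiniteDimensional ℝ E]

lemma measurePreserving : MeasurePreserving (hyperplaneReflection e c) :=
  (measurePreserving_add_left volume (c • e)).comp (reflection (ℝ ∙ e)ᗮ).measurePreserving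

lemma measurableEmbedding : MeasurableEmbedding (hyperplaneReflection e c) :=
  (MeasurableEquiv.ofInvolutive _ (involutive e c)
    (measurePreserving e c).measurable).measurableEmbedding

end hyperplaneReflection

lemma norm_smul_sub_sq {e : E} (he : ‖e‖ = 1) (a : ℝ) (y : E) :
    ‖a • e - y‖ ^ 2 = a ^ 2 - 2 * a * ⟪e, y⟫ + ‖y‖ ^ 2 := by
  rw [norm_sub_sq_real, real_inner_smul_left, norm_smul, he, mul_one, Real.norm_eq_abs, sq_abs]
  ring

lemma norm_smul_sub_lt_of_norm_add_smul_sub_lt {e : E} (he : ‖e‖ = 1) {r r' : ℝ}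
    (hrr' : r < r') (hc : 0 < r + r') {y : E} (hy : ‖(r + r') • e - y‖ < ‖y‖) :
    ‖r' • e - y‖ < ‖r • e - y‖ := by
  have hy2 := pow_lt_pow_left₀ hy (norm_nonneg _) two_ne_zero
  rw [← pow_lt_pow_iff_left₀ (norm_nonneg _) (norm_nonneg _) two_ne_zero]
  rw [norm_smul_sub_sq he] at hy2 ⊢
  rw [norm_smul_sub_sq he]
  have hinner : r + r' < 2 * ⟪e, y⟫ := by nlinarith
  nlinarith

lemma measure_compl_ball_inter_ball_smul_ne_zero [MeasurableSpace E] [OpensMeasurableSpace E]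
    (μ : Measure E) [μ.IsOpenPosMeasure] {e : E} (he : ‖e‖ = 1) {c : ℝ} (hc0 : 0 < c)
    (hc2 : c < 2) : μ ((ball 0 1)ᶜ ∩ ball (c • e) 1) ≠ 0 := by
  have hU : IsOpen ((closedBall 0 1)ᶜ ∩ ball (c • e) 1) :=
    isClosed_closedBall.isOpen_compl.inter isOpen_ball
  have hp : (1 + c / 2) • e ∈ (closedBall 0 1)ᶜ ∩ ball (c • e) 1 := by
    simp only [mem_inter_iff, mem_compl_iff, mem_closedBall_zero_iff, mem_ball, dist_eq_norm,
      ← sub_smul, norm_smul, he, mul_one, Real.norm_eq_abs, abs_lt]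
    rw [abs_of_pos (by linarith)]
    exact ⟨by linarith, by linarith, by linarith⟩
  refine (pos_iff_ne_zero.1 ((hU.measure_pos μ ⟨_, hp⟩).trans_le (measure_mono ?_)))
  exact inter_subset_inter_left _ (compl_subset_compl.2 ball_subset_closedBall)

variable [MeasurableSpace E] [BorelSpace E] [FiniteDimensional ℝ E] {φ : ℝ → ℝ}

theorem setIntegral_compl_ball_comp_norm_smul_sub_lt (hφ : StrictAntiOn φ (Ioi 0)) {e : E}
    (he : ‖e‖ = 1) {r r' : ℝ} (hr : 0 ≤ r) (hrr' : r < r') (hr' : r' < 1)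
    (hint : IntegrableOn (fun y => φ ‖r • e - y‖) (ball 0 1)ᶜ)
    (hint' : IntegrableOn (fun y => φ ‖r' • e - y‖) (ball 0 1)ᶜ) :
    ∫ y in (ball 0 1)ᶜ, φ ‖r • e - y‖ < ∫ y in (ball 0 1)ᶜ, φ ‖r' • e - y‖ := by
  set R := hyperplaneReflection e (r + r')
  set A : Set E := (ball 0 1)ᶜ
  set D : Set E := ball ((r + r') • e) 1
  have hR : ∀ z, ‖R z‖ = ‖(r + r') • e - z‖ := fun z => by
    rw [← norm_neg, ← zero_sub, hyperplaneReflection.norm_sub_apply,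
      hyperplaneReflection.apply_zero]
  have hA : R ⁻¹' A = Dᶜ := by
    ext z
    simp [A, D, hR, dist_eq_norm, norm_sub_rev z]
  have hD : R ⁻¹' D = Aᶜ := by
    rw [← compl_compl D, ← hA, preimage_compl, (hyperplaneReflection.involutive e _).preimage]
  have hAD : R ⁻¹' (A \ D) = A \ D := by
    rw [preimage_sdiff, hA, hD, sdiff_compl, inter_comm, sdiff_eq]
  have h_out : ∫ y in A \ D, φ ‖r • e - y‖ = ∫ y in A \ D, φ ‖r' • e - y‖ := by
    rw [← (hyperplaneReflection.measurePreserving e _).setIntegral_preimage_emb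
      (hyperplaneReflection.measurableEmbedding e _), hAD]
    simp_rw [hyperplaneReflection.norm_sub_apply, hyperplaneReflection.apply_smul,
      add_sub_cancel_left]
  have h_in : ∫ y in A ∩ D, φ ‖r • e - y‖ < ∫ y in A ∩ D, φ ‖r' • e - y‖ := by
    refine setIntegral_lt_setIntegral_of_forall_lt
      (measurableSet_ball.compl.inter measurableSet_ball)
      (measure_compl_ball_inter_ball_smul_ne_zero _ he (by linarith) (by linarith))
      (hint.mono_set inter_subset_left) (hint'.mono_set inter_subset_left) ?_
    rintro y ⟨hyA, hyD⟩
    have hy : 1 ≤ ‖y‖ := by simpa [A] using hyA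
    rw [mem_ball, dist_eq_norm, norm_sub_rev] at hyD
    have hclose : ‖r' • e - y‖ < ‖r • e - y‖ :=
      norm_smul_sub_lt_of_norm_add_smul_sub_lt he hrr' (by linarith) (by linarith)
    have hnorm : ‖r' • e‖ = r' := by
      rw [norm_smul, he, mul_one, Real.norm_of_nonneg (by linarith)]
    have hpos : 0 < ‖r' • e - y‖ := by
      have := norm_sub_norm_le y (r' • e)
      rw [norm_sub_rev y] at this
      linarith
    exact hφ hpos (hpos.trans hclose) hclose
  rw [← integral_inter_add_sdiff measurableSet_ball hint,
    ← integral_inter_add_sdiff measurableSet_ball hint', h_out]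
  exact add_lt_add_left h_in _

theorem setIntegral_compl_ball_comp_norm_sub_lt_of_norm_lt (hφ : StrictAntiOn φ (Ioi 0))
    {x x' : E} (h : ‖x‖ < ‖x'‖) (h' : ‖x'‖ < 1)
    (hint : IntegrableOn (fun y => φ ‖x - y‖) (ball 0 1)ᶜ)
    (hint' : IntegrableOn (fun y => φ ‖x' - y‖) (ball 0 1)ᶜ) :
    ∫ y in (ball 0 1)ᶜ, φ ‖x - y‖ < ∫ y in (ball 0 1)ᶜ, φ ‖x' - y‖ := by
  have hx'0 : ‖x'‖ ≠ 0 := ((norm_nonneg x).trans_lt h).ne'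
  set e := ‖x'‖⁻¹ • x'
  have he : ‖e‖ = 1 := by rw [norm_smul, norm_inv, norm_norm, inv_mul_cancel₀ hx'0]
  have hx' : ‖x'‖ • e = x' := by rw [smul_smul, mul_inv_cancel₀ hx'0, one_smul]
  obtain ⟨T, hT⟩ : ∃ T : E ≃ₗᵢ[ℝ] E, T (‖x‖ • e) = x :=
    ⟨_, reflection_sub (by rw [norm_smul, he, mul_one, norm_norm])⟩
  rw [← hT, integrableOn_compl_ball_comp_norm_sub_map_iff] at hint
  rw [← hx'] at hint' ⊢
  rw [← hT, setIntegral_compl_ball_comp_norm_sub_map]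
  exact setIntegral_compl_ball_comp_norm_smul_sub_lt hφ he (norm_nonneg x) h h' hint hint'

theorem complement_integral_mono_general (n : ℕ) (s r r' : ℝ)
    (hs : s ∈ Set.Ioo (0 : ℝ) 1) (hrr' : r < r') (hr' : r' < 1)
    (xr xr' : EuclideanSpace ℝ (Fin n)) (hx : ‖xr‖ = r) (hx' : ‖xr'‖ = r') :
    IntegrableOn (fun y => ‖xr - y‖ ^ (-((n : ℝ) + s)))
      (Metric.ball (0 : EuclideanSpace ℝ (Fin n)) 1)ᶜ volume ∧
    IntegrableOn (fun y => ‖xr' - y‖ ^ (-((n : ℝ) + s)))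
      (Metric.ball (0 : EuclideanSpace ℝ (Fin n)) 1)ᶜ volume ∧
    (∫ y in (Metric.ball (0 : EuclideanSpace ℝ (Fin n)) 1)ᶜ, ‖xr - y‖ ^ (-((n : ℝ) + s))) <
      ∫ y in (Metric.ball (0 : EuclideanSpace ℝ (Fin n)) 1)ᶜ, ‖xr' - y‖ ^ (-((n : ℝ) + s)) := by
  subst hx hx'
  have ha : (finrank ℝ (EuclideanSpace ℝ (Fin n)) : ℝ) < n + s := by simp [hs.1]
  have hint := integrableOn_compl_ball_norm_sub_rpow_neg volume ha (hrr'.trans hr')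
  have hint' := integrableOn_compl_ball_norm_sub_rpow_neg volume ha hr'
  refine ⟨hint, hint', ?_⟩
  exact setIntegral_compl_ball_comp_norm_sub_lt_of_norm_lt
    (Real.strictAntiOn_rpow_Ioi_of_exponent_neg (by linarith [hs.1])) hrr' hr' hint hint'

theorem complement_integral_mono (n : ℕ) (hn : 1 ≤ n) (s r r' : ℝ)
    (hs : s ∈ Set.Ioo (0 : ℝ) 1) (hr : 0 < r) (hrr' : r < r') (hr' : r' < 1)
    (xr xr' : EuclideanSpace ℝ (Fin n)) (hx : ‖xr‖ = r) (hx' : ‖xr'‖ = r') :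
    IntegrableOn (fun y => ‖xr - y‖ ^ (-((n : ℝ) + s)))
      (Metric.ball (0 : EuclideanSpace ℝ (Fin n)) 1)ᶜ volume ∧
    IntegrableOn (fun y => ‖xr' - y‖ ^ (-((n : ℝ) + s)))
      (Metric.ball (0 : EuclideanSpace ℝ (Fin n)) 1)ᶜ volume ∧
    (∫ y in (Metric.ball (0 : EuclideanSpace ℝ (Fin n)) 1)ᶜ, ‖xr - y‖ ^ (-((n : ℝ) + s))) <
      ∫ y in (Metric.ball (0 : EuclideanSpace ℝ (Fin n)) 1)ᶜ, ‖xr' - y‖ ^ (-((n : ℝ) + s)) :=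
  complement_integral_mono_general n s r r' hs hrr' hr' xr xr' hx hx'
end
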